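/- arXiv:1907.08064 — 2 statements merged into one kernel-verified Lean document; each statement's English description precedes it below -/
import Mathlib

section
/- Let k_A, k_B, s, z be positive integers with z ≥ k_B, let k = k_A·k_B and n = k + s. Let M(D) = [I_k | Y_{k_A,s}(D^z) ⊙ Y_{k_B,s}(D)] be the k × n matrix over ℝ[D] whose first k columns form the identity matrix and whose last s columns are the Khatri–Rao product of Y_{k_A,s}(D^z) and Y_{k_B,s}(D). Then every k × k submatrix of M(D) has determinant a nonzero polynomial in ℝ[D], i.e., is nonsingular. -/
open Polynomial Finset Equiv Function


lemma perm_eq_one_of_strictMono {n : ℕ} (σ : Equiv.Perm (Fin n)) (h : StrictMono σ) :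
    σ = 1 := by
  have h2 : (StrictMono.orderIsoOfSurjective (σ : Fin n → Fin n) h σ.surjective)
      = OrderIso.refl (Fin n) := Subsingleton.elim _ _
  ext i
  have h3 : σ i = i := by
    have := congrArg (fun f : Fin n ≃o Fin n => f i) h2
    simpa using this
  exact congrArg Fin.val h3

lemma det_vdm_strictMono {n : ℕ} (E B : Fin n → ℕ) (hE : StrictMono E) (hB : StrictMono B) :
    (Matrix.of fun i j : Fin n => (X : Polynomial ℝ) ^ (E i * B j)).det ≠ 0 := by
  have key : ∀ σ : Equiv.Perm (Fin n), σ ≠ 1 →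
      ∑ i, E (σ i) * B i < ∑ i, E i * B i := by
    intro σ hσ
    have hmono : Monovary (fun i => (E i : ℤ)) (fun i => (B i : ℤ)) := by
      intro i j hij
      have hb : B i < B j := Nat.cast_lt.mp hij
      exact Nat.cast_le.mpr (hE.monotone (hB.lt_iff_lt.mp hb).le)
    have hnm : ¬ Monovary ((fun i => (E i : ℤ)) ∘ σ) (fun i => (B i : ℤ)) := by
      intro hm
      apply hσ
      apply perm_eq_one_of_strictMono
      intro i j hij
      have h1 : (E (σ i) : ℤ) ≤ E (σ j) := hm (Nat.cast_lt.mpr (hB hij))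
      have h2 : E (σ i) ≤ E (σ j) := Nat.cast_le.mp h1
      have h3 : E (σ i) ≠ E (σ j) := fun hc => (σ.injective.ne (ne_of_lt hij)) (hE.injective hc)
      exact hE.lt_iff_lt.mp (lt_of_le_of_ne h2 h3)
    have h4 := (Monovary.sum_comp_perm_mul_lt_sum_mul_iff (σ := σ) hmono).mpr hnm
    have hcast : ((∑ i, E (σ i) * B i : ℕ) : ℤ) < ((∑ i, E i * B i : ℕ) : ℤ) := by
      push_cast
      exact h4
    exact_mod_cast hcast
  intro hdet
  have hco := congrArg (fun p => Polynomial.coeff p (∑ i, E i * B i)) hdet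
  rw [Matrix.det_apply] at hco
  simp only [Polynomial.coeff_zero] at hco
  rw [Polynomial.finset_sum_coeff] at hco
  have hterm : ∀ σ : Equiv.Perm (Fin n),
      ((Equiv.Perm.sign σ • ∏ i, (Matrix.of fun i j : Fin n => (X : Polynomial ℝ) ^ (E i * B j)) (σ i) i).coeff (∑ i, E i * B i))
      = Equiv.Perm.sign σ • (if (∑ i, E i * B i) = ∑ i, E (σ i) * B i then (1:ℝ) else 0) := by
    intro σ
    have hp : (∏ i, (Matrix.of fun i j : Fin n => (X : Polynomial ℝ) ^ (E i * B j)) (σ i) i)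
        = X ^ (∑ i, E (σ i) * B i) := by
      simp only [Matrix.of_apply]
      rw [Finset.prod_pow_eq_pow_sum]
    rw [hp, Polynomial.coeff_smul, Polynomial.coeff_X_pow]
  rw [Finset.sum_congr rfl (fun σ _ => hterm σ)] at hco
  rw [Finset.sum_eq_single (1 : Equiv.Perm (Fin n))] at hco
  · simp at hco
  · intro σ _ hσ
    rw [if_neg (by exact fun h => absurd h.symm (ne_of_lt (key σ hσ)))]
    simp
  · intro h
    exact absurd (Finset.mem_univ _) h

lemma det_vdm_inj {n : ℕ} (e b : Fin n → ℕ) (he : Function.Injective e)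
    (hb : Function.Injective b) :
    (Matrix.of fun i j : Fin n => (X : Polynomial ℝ) ^ (e i * b j)).det ≠ 0 := by
  set τ := Tuple.sort e with hτ
  set ρ := Tuple.sort b with hρ
  have hE : StrictMono (e ∘ τ) :=
    (Tuple.monotone_sort e).strictMono_of_injective (he.comp τ.injective)
  have hB : StrictMono (b ∘ ρ) :=
    (Tuple.monotone_sort b).strictMono_of_injective (hb.comp ρ.injective)
  have hsub : ((Matrix.of fun i j : Fin n => (X : Polynomial ℝ) ^ (e i * b j)).submatrix τ ρ)
      = Matrix.of fun i j : Fin n => (X : Polynomial ℝ) ^ ((e ∘ τ) i * (b ∘ ρ) j) := rfl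
  have hd := det_vdm_strictMono (e ∘ τ) (b ∘ ρ) hE hB
  rw [← hsub] at hd
  intro h0
  apply hd
  have : ((Matrix.of fun i j : Fin n => (X : Polynomial ℝ) ^ (e i * b j)).submatrix τ ρ)
      = (((Matrix.of fun i j : Fin n => (X : Polynomial ℝ) ^ (e i * b j)).submatrix τ id).submatrix id ρ) := rfl
  rw [this, Matrix.det_permute', Matrix.det_permute, h0]
  ring

lemma det_aux : ∀ (n : ℕ) (e : Fin n → ℕ), Function.Injective e →
    ∀ (col : Fin n → ℕ ⊕ ℕ), Function.Injective col →
    (∀ j v, col j = Sum.inl v → ∃ i, e i = v) →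
    ∀ (N : Matrix (Fin n) (Fin n) (Polynomial ℝ)),
    (∀ i j, N i j =
      Sum.elim (fun v => if e i = v then 1 else 0) (fun c => X ^ (e i * c)) (col j)) →
    N.det ≠ 0 := by
  intro n
  induction n with
  | zero =>
    intro e _ col _ _ N _
    simp [Matrix.det_fin_zero]
  | succ m ih =>
    intro e he col hcol hrow N hN
    by_cases hex : ∃ j v, col j = Sum.inl v
    · obtain ⟨j, v, hjv⟩ := hex
      obtain ⟨p, hp⟩ := hrow j v hjv
      -- column j is the indicator of row p
      have hcolj : ∀ i, N i j = if i = p then 1 else 0 := by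
        intro i
        rw [hN, hjv]
        simp only [Sum.elim_inl]
        by_cases hip : i = p
        · subst hip; rw [if_pos hp, if_pos rfl]
        · rw [if_neg (fun hc => hip (he (hc.trans hp.symm))), if_neg hip]
      rw [Matrix.det_succ_column N j]
      rw [Finset.sum_eq_single p]
      · rw [hcolj p, if_pos rfl, mul_one]
        have hminor : (N.submatrix p.succAbove j.succAbove).det ≠ 0 := by
          apply ih (e ∘ p.succAbove) (he.comp (Fin.succAbove_right_injective))
            (col ∘ j.succAbove) (hcol.comp (Fin.succAbove_right_injective))
          · intro j' w hw
            simp only [comp_apply] at hw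
            obtain ⟨i, hi⟩ := hrow _ w hw
            have hine : i ≠ p := by
              intro hc
              subst hc
              have : col (j.succAbove j') = col j := by rw [hw, hjv, ← hi, hp]
              exact Fin.succAbove_ne j j' (hcol this)
            obtain ⟨i', hi'⟩ := Fin.exists_succAbove_eq hine
            exact ⟨i', by simp [hi', hi]⟩
          · intro i' j'
            simp only [Matrix.submatrix_apply, comp_apply]
            exact hN _ _
        have hne : ((-1 : Polynomial ℝ)) ^ ((p : ℕ) + (j : ℕ)) ≠ 0 := by
          apply pow_ne_zero
          intro hc
          have := congrArg (fun q => Polynomial.coeff q 0) hc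
          simp at this
        exact mul_ne_zero hne hminor
      · intro i _ hip
        rw [hcolj i, if_neg hip]
        ring
      · intro h; exact absurd (Finset.mem_univ _) h
    · push_neg at hex
      have hb : ∀ j, ∃ c, col j = Sum.inr c := by
        intro j
        cases hc : col j with
        | inl v => exact absurd hc (hex j v)
        | inr c => exact ⟨c, rfl⟩
      choose b hbspec using hb
      have hbinj : Function.Injective b := by
        intro j j' hjj
        apply hcol
        rw [hbspec, hbspec, hjj]
      have hNeq : N = Matrix.of fun i j : Fin m.succ => (X : Polynomial ℝ) ^ (e i * b j) := by
        ext i j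
        rw [hN, hbspec]
        simp
      rw [hNeq]
      exact det_vdm_inj e b he hbinj

/-- Every `k × k` submatrix of
`M(D) = [I_k | Y_{k_A,s}(D^z) ⊙ Y_{k_B,s}(D)]` (rows ordered so that row
`m = i₁·k_B + i₂` of the Khatri–Rao part has `(m, j)` entry
`D^{(m % k_B + z·(m / k_B)) · j}`) has determinant a nonzero polynomial in `ℝ[D]`,
provided `z ≥ k_B`. -/
theorem every_square_submatrix_of_khatriRao_gen_nonsingular
    (kA kB s z : ℕ) (hkA : 0 < kA) (hkB : 0 < kB) (hs : 0 < s) (hz : kB ≤ z)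
    (M : Matrix (Fin (kA * kB)) (Fin (kA * kB + s)) (Polynomial ℝ))
    (hM : ∀ (m : Fin (kA * kB)) (j : Fin (kA * kB + s)),
      M m j = if (j : ℕ) < kA * kB
        then (if (j : ℕ) = (m : ℕ) then 1 else 0)
        else (X : Polynomial ℝ) ^
          (((m : ℕ) % kB + z * ((m : ℕ) / kB)) * ((j : ℕ) - kA * kB))) :
    ∀ (I : Finset (Fin (kA * kB + s))) (hI : I.card = kA * kB),
      (M.submatrix id (I.orderEmbOfFin hI)).det ≠ 0 := by
  intro I hI
  set g : Fin (kA * kB) → Fin (kA * kB + s) := fun j => I.orderEmbOfFin hI j with hg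
  have hginj : Function.Injective g := (I.orderEmbOfFin hI).injective
  set e : Fin (kA * kB) → ℕ := fun m => (m : ℕ) % kB + z * ((m : ℕ) / kB) with he'
  have he : Function.Injective e := by
    intro m m' h
    simp only [he'] at h
    have h1 : (m : ℕ) % kB < z := lt_of_lt_of_le (Nat.mod_lt _ hkB) hz
    have h2 : (m' : ℕ) % kB < z := lt_of_lt_of_le (Nat.mod_lt _ hkB) hz
    have hmod : (m : ℕ) % kB = (m' : ℕ) % kB := by
      have := congrArg (fun t => t % z) h
      simpa [Nat.add_mul_mod_self_left, Nat.mod_eq_of_lt h1, Nat.mod_eq_of_lt h2] using this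
    have hdiv : (m : ℕ) / kB = (m' : ℕ) / kB :=
      Nat.eq_of_mul_eq_mul_left (lt_of_lt_of_le hkB hz) (by omega)
    have hm1 : (m : ℕ) = kB * ((m : ℕ) / kB) + (m : ℕ) % kB := (Nat.div_add_mod _ _).symm
    rw [hdiv, hmod] at hm1
    have hm2 := Nat.div_add_mod ((m' : ℕ)) kB
    exact Fin.ext (by omega)
  set col : Fin (kA * kB) → ℕ ⊕ ℕ := fun j =>
    if h : ((g j : Fin (kA * kB + s)) : ℕ) < kA * kB
    then Sum.inl (e ⟨(g j : ℕ), h⟩)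
    else Sum.inr ((g j : ℕ) - kA * kB) with hc'
  have hcol : Function.Injective col := by
    intro j j' h
    simp only [hc'] at h
    apply hginj
    apply Fin.ext
    by_cases h1 : ((g j : Fin (kA * kB + s)) : ℕ) < kA * kB <;>
      by_cases h2 : ((g j' : Fin (kA * kB + s)) : ℕ) < kA * kB
    · rw [dif_pos h1, dif_pos h2] at h
      have h3 := congrArg Fin.val (he (Sum.inl.inj h))
      exact h3
    · rw [dif_pos h1, dif_neg h2] at h; exact absurd h (by simp)
    · rw [dif_neg h1, dif_pos h2] at h; exact absurd h (by simp)
    · rw [dif_neg h1, dif_neg h2] at h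
      have := Sum.inr.inj h
      omega
  have hrow : ∀ j v, col j = Sum.inl v → ∃ i, e i = v := by
    intro j v h
    simp only [hc'] at h
    by_cases h1 : ((g j : Fin (kA * kB + s)) : ℕ) < kA * kB
    · rw [dif_pos h1] at h
      exact ⟨⟨(g j : ℕ), h1⟩, (Sum.inl.inj h).symm ▸ rfl⟩
    · rw [dif_neg h1] at h; exact absurd h (by simp)
  apply det_aux (kA * kB) e he col hcol hrow
  intro i j
  simp only [Matrix.submatrix_apply, id_eq]
  rw [hM]
  simp only [hc']
  by_cases h1 : ((g j : Fin (kA * kB + s)) : ℕ) < kA * kB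
  · rw [dif_pos h1, if_pos h1]
    simp only [Sum.elim_inl]
    by_cases hh : ((g j : Fin (kA * kB + s)) : ℕ) = (i : ℕ)
    · rw [if_pos hh, if_pos (congrArg e (Fin.ext hh.symm) : e i = e ⟨(g j : ℕ), h1⟩)]
    · rw [if_neg hh, if_neg (fun hc => hh ((congrArg Fin.val (he hc)).symm))]
  · rw [dif_neg h1, if_neg h1]
    simp [he']
    rfl
end

section
/- With G̃ as defined, for every subset I ⊆ {0,...,n-1} with |I| = k, the kq × kq matrix G̃_I · G̃_Iᵀ is a symmetric matrix all of whose q × q blocks are Toeplitz; that is, for every pair (i, j) of block indices there exists a function f_{i,j} : ℤ → ℝ such that the (m, l) entry of the (i, j) block equals f_{i,j}(m - l) for all 0 ≤ m, l ≤ q-1. -/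
open Matrix

lemma sum_ite_ite {N u v : ℕ} (hu : u < N) :
    (∑ c : Fin N, (if (c : ℕ) = u then (1:ℝ) else 0) * (if (c : ℕ) = v then 1 else 0))
      = if u = v then 1 else 0 := by
  rw [Finset.sum_eq_single (⟨u, hu⟩ : Fin N)]
  · simp [eq_comm]
  · intro c _ hc
    have : (c : ℕ) ≠ u := fun h => hc (Fin.ext h)
    simp [this]
  · simp


lemma par_entry (k s q : ℕ) (hk : 0 < k)
    (a : Fin s → ℕ) (b : Fin k → ℕ)
    (r : Fin k → Fin s → ℝ)
    (Gpar : (j : Fin s) → Matrix (Fin k × Fin q) (Fin (q + a j * b ⟨k - 1, by omega⟩)) ℝ)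
    (hGpar : ∀ (j : Fin s) (i : Fin k) (m : Fin q)
        (c : Fin (q + a j * b ⟨k - 1, by omega⟩)),
      Gpar j (i, m) c = r i j * (if (c : ℕ) = a j * b i + (m : ℕ) then 1 else 0))
    (hb : Monotone b)
    (j' : Fin s) (i j : Fin k) (m l : Fin q) :
    (Gpar j' * (Gpar j')ᵀ) (i, m) (j, l)
      = r i j' * r j j' *
        (if (m:ℤ) - (l:ℤ) = (a j' : ℤ) * (b j : ℤ) - (a j' : ℤ) * (b i : ℤ) then 1 else 0) := by
  have hbi : b i ≤ b ⟨k - 1, by omega⟩ := by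
    apply hb
    rw [Fin.le_def]
    have := i.isLt
    simp only []
    omega
  have key : (Gpar j' * (Gpar j')ᵀ) (i, m) (j, l)
      = ∑ c : Fin (q + a j' * b ⟨k - 1, by omega⟩),
        (if (c:ℕ) = a j' * b i + (m:ℕ) then (1:ℝ) else 0)
          * (if (c:ℕ) = a j' * b j + (l:ℕ) then 1 else 0) * (r i j' * r j j') := by
    rw [Matrix.mul_apply]
    refine Finset.sum_congr rfl fun c _ => ?_
    rw [Matrix.transpose_apply, hGpar, hGpar]
    ring
  rw [key, ← Finset.sum_mul,
    sum_ite_ite (by have hm := m.isLt; have := Nat.mul_le_mul_left (a j') hbi; omega)]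
  have hcond : (a j' * b i + (m:ℕ) = a j' * b j + (l:ℕ))
      ↔ ((m:ℤ) - (l:ℤ) = (a j' : ℤ) * (b j : ℤ) - (a j' : ℤ) * (b i : ℤ)) := by
    constructor <;> intro h
    · have : ((a j' * b i + (m:ℕ) : ℕ) : ℤ) = ((a j' * b j + (l:ℕ) : ℕ) : ℤ) := by
        exact congrArg (Nat.cast : ℕ → ℤ) h
      push_cast at this
      linarith
    · have h2' : ((a j' * b i + (m:ℕ) : ℕ) : ℤ) = ((a j' * b j + (l:ℕ) : ℕ) : ℤ) := by
        push_cast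
        linarith
      exact_mod_cast h2'
  split_ifs with h1 h2 h2
  · ring
  · exact absurd (hcond.mp h1) h2
  · exact absurd (hcond.mpr h2) h1
  · ring

/-- for every subset `I` of block-column indices with `|I| = k`,
the matrix `G̃_I · G̃_Iᵀ` (the sum over `ℓ ∈ I` of the Gram matrices of the
block-columns of `G̃`) is symmetric and all of its `q × q` blocks are Toeplitz:
the `(m,l)` entry of the `(i,j)` block is a function of `m - l` alone. -/
theorem gram_of_GI_symmetric_with_toeplitz_blocks
    (k s q : ℕ) (hk : 0 < k) (hs : 0 < s) (hq : 0 < q)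
    (a : Fin s → ℕ) (b : Fin k → ℕ) (ha : StrictMono a) (hb : StrictMono b)
    (r : Fin k → Fin s → ℝ)
    (Gmsg : Fin k → Matrix (Fin k × Fin q) (Fin q) ℝ)
    (hGmsg : ∀ (ℓ : Fin k) (i : Fin k) (m : Fin q) (c : Fin q),
      Gmsg ℓ (i, m) c = if i = ℓ ∧ m = c then 1 else 0)
    (Gpar : (j : Fin s) → Matrix (Fin k × Fin q) (Fin (q + a j * b ⟨k - 1, by omega⟩)) ℝ)
    (hGpar : ∀ (j : Fin s) (i : Fin k) (m : Fin q)
        (c : Fin (q + a j * b ⟨k - 1, by omega⟩)),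
      Gpar j (i, m) c = r i j * (if (c : ℕ) = a j * b i + (m : ℕ) then 1 else 0))
    (I : Finset (Fin (k + s))) (hI : I.card = k)
    (B : Matrix (Fin k × Fin q) (Fin k × Fin q) ℝ)
    (hB : B = ∑ ℓ ∈ I,
      if hℓ : (ℓ : ℕ) < k
        then Gmsg ⟨(ℓ : ℕ), hℓ⟩ * (Gmsg ⟨(ℓ : ℕ), hℓ⟩)ᵀ
        else (fun P => P * Pᵀ) (Gpar ⟨(ℓ : ℕ) - k, by have := ℓ.isLt; omega⟩)) :
    Bᵀ = B ∧
    ∀ i j : Fin k, ∃ f : ℤ → ℝ, ∀ m l : Fin q,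
      B (i, m) (j, l) = f ((m : ℤ) - (l : ℤ)) := by
  constructor
  · subst hB
    rw [Matrix.transpose_sum]
    refine Finset.sum_congr rfl fun ℓ _ => ?_
    split_ifs with h <;> simp [Matrix.transpose_mul]
  · intro i j
    refine ⟨fun d => ∑ ℓ ∈ I,
      if hℓ : (ℓ : ℕ) < k
        then (if i = ⟨(ℓ : ℕ), hℓ⟩ ∧ j = ⟨(ℓ : ℕ), hℓ⟩ ∧ d = 0 then 1 else 0)
        else (fun j' => r i j' * r j j' *
          (if d = (a j' : ℤ) * (b j : ℤ) - (a j' : ℤ) * (b i : ℤ) then 1 else 0))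
          (⟨(ℓ : ℕ) - k, by have := ℓ.isLt; omega⟩ : Fin s), ?_⟩
    intro m l
    subst hB
    rw [Matrix.sum_apply]
    simp only []
    refine Finset.sum_congr rfl fun ℓ _ => ?_
    by_cases hℓ : (ℓ : ℕ) < k
    · simp only [dif_pos hℓ]
      have key : (Gmsg ⟨(ℓ:ℕ), hℓ⟩ * (Gmsg ⟨(ℓ:ℕ), hℓ⟩)ᵀ) (i, m) (j, l)
          = ∑ c : Fin q, (if (c:ℕ) = (m:ℕ) then (1:ℝ) else 0) * (if (c:ℕ) = (l:ℕ) then 1 else 0)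
            * (if i = ⟨(ℓ:ℕ), hℓ⟩ then 1 else 0) * (if j = ⟨(ℓ:ℕ), hℓ⟩ then 1 else 0) := by
        rw [Matrix.mul_apply]
        refine Finset.sum_congr rfl fun c _ => ?_
        rw [Matrix.transpose_apply, hGmsg, hGmsg]
        have e1 : (m = c) = ((c:ℕ) = (m:ℕ)) := by
          simp [Fin.ext_iff, eq_comm]
        have e2 : (l = c) = ((c:ℕ) = (l:ℕ)) := by
          simp [Fin.ext_iff, eq_comm]
        simp only [ite_and, e1, e2]
        by_cases h1 : i = ⟨(ℓ:ℕ), hℓ⟩ <;> by_cases h2 : j = ⟨(ℓ:ℕ), hℓ⟩ <;>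
          simp [h1, h2] <;> split_ifs <;> ring
      rw [key, ← Finset.sum_mul, ← Finset.sum_mul, sum_ite_ite m.isLt]
      by_cases h1 : i = ⟨(ℓ:ℕ), hℓ⟩ <;> by_cases h2 : j = ⟨(ℓ:ℕ), hℓ⟩ <;>
        simp [h1, h2] <;> split_ifs <;> first | rfl | omega
    · simp only [dif_neg hℓ]
      exact par_entry k s q hk a b r Gpar hGpar hb.monotone _ i j m l
end
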